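/- arXiv:2406.08175 — 4 statements merged into one kernel-verified Lean document; each statement's English description precedes it below -/
import Mathlib

section
/- Let P be an irreducible row-stochastic matrix on a finite set S, δ and μ probability distributions over S. Then there exists a solution x* of the system x (I − P) = δ − μP such that x*(s) > μ(s) for all s ∈ S. -/
open Matrix

section Aux

variable {S : Type} [Fintype S] [DecidableEq S] [Nonempty S]

/-- Maximum principle: a right eigenvector of an irreducible nonnegative row-stochastic
matrix for eigenvalue 1 is constant. -/
lemma flow_aux_right_ker_const (P : Matrix S S ℝ)
    (hnn : ∀ u v, 0 ≤ P u v) (hrow : ∀ u, ∑ v, P u v = 1)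
    (hirr : ∀ u v, Relation.ReflTransGen (fun a b => 0 < P a b) u v)
    (y : S → ℝ) (hy : P *ᵥ y = y) : ∃ c : ℝ, y = fun _ => c := by
  obtain ⟨u0, hu0⟩ := Finite.exists_max y
  refine ⟨y u0, funext fun v => ?_⟩
  have key : ∀ a b : S, 0 < P a b → y a = y u0 → y b = y u0 := by
    intro a b hab ha
    have hPy : ∑ w, P a w * y w = y a := by
      have := congrFun hy a
      simpa [mulVec, dotProduct] using this
    have hsum : ∑ w, P a w * (y u0 - y w) = 0 := by
      have h1 : ∑ w, P a w * (y u0 - y w)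
          = (∑ w, P a w) * y u0 - ∑ w, P a w * y w := by
        rw [Finset.sum_mul, ← Finset.sum_sub_distrib]
        congr 1; ext w; ring
      rw [h1, hrow, hPy, ha]; ring
    have hzero : ∀ w ∈ Finset.univ, P a w * (y u0 - y w) = 0 :=
      (Finset.sum_eq_zero_iff_of_nonneg (fun w _ =>
        mul_nonneg (hnn a w) (by linarith [hu0 w]))).mp hsum
    have hb := hzero b (Finset.mem_univ b)
    rcases mul_eq_zero.mp hb with h | h
    · exact absurd h (ne_of_gt hab)
    · linarith
  have path := hirr u0 v
  induction path with
  | refl => rfl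
  | tail hab' hab ih => exact key _ _ hab ih

end Aux

/-- For an irreducible row-stochastic matrix `P` and probability distributions `δ`, `μ`,
the system `x (I - P) = δ - μ P` has a solution `x*` with `x*(s) > μ(s)` for all `s`. -/
theorem flow_system_solvable_dominating {S : Type} [Fintype S] [DecidableEq S] [Nonempty S]
    (P : Matrix S S ℝ)
    (hnn : ∀ u v, 0 ≤ P u v) (hrow : ∀ u, ∑ v, P u v = 1)
    (hirr : ∀ u v, Relation.ReflTransGen (fun a b => 0 < P a b) u v)
    (δ μ : S → ℝ)
    (hδnn : ∀ s, 0 ≤ δ s) (hδ1 : ∑ s, δ s = 1)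
    (hμnn : ∀ s, 0 ≤ μ s) (hμ1 : ∑ s, μ s = 1) :
    ∃ x : S → ℝ, x ᵥ* (1 - P) = δ - μ ᵥ* P ∧ ∀ s, μ s < x s := by
  classical
  set A : Matrix S S ℝ := 1 - P with hAdef
  have hArow : ∀ u, ∑ v, A u v = 0 := by
    intro u
    have h1 : ∑ v, A u v = (∑ v, (1 : Matrix S S ℝ) u v) - ∑ v, P u v := by
      rw [← Finset.sum_sub_distrib]; rfl
    rw [h1, hrow]
    simp [Matrix.one_apply]
  -- constant vector 1 is in the right kernel of A
  have hone : (fun _ => (1:ℝ)) ≠ (0 : S → ℝ) := by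
    intro h
    have := congrFun h (Classical.arbitrary S)
    simp at this
  have hAone : A *ᵥ (fun _ => (1:ℝ)) = 0 := by
    funext u
    simpa [mulVec, dotProduct] using hArow u
  -- the kernel of mulVecLin A is exactly the constants
  have hker : LinearMap.ker A.mulVecLin = Submodule.span ℝ {(fun _ => (1:ℝ) : S → ℝ)} := by
    apply le_antisymm
    · intro y hy
      have hy' : A *ᵥ y = 0 := hy
      have hPy : P *ᵥ y = y := by
        have h2 : y - P *ᵥ y = 0 := by
          have := hy'
          rwa [hAdef, Matrix.sub_mulVec, Matrix.one_mulVec] at this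
        exact (sub_eq_zero.mp h2).symm
      obtain ⟨c, hc⟩ := flow_aux_right_ker_const P hnn hrow hirr y hPy
      have : y = c • (fun _ => (1:ℝ) : S → ℝ) := by
        rw [hc]; funext s; simp
      rw [this]
      exact Submodule.smul_mem _ _ (Submodule.mem_span_singleton_self _)
    · rw [Submodule.span_le, Set.singleton_subset_iff]
      exact hAone
  -- rank of A is card S - 1
  have hkerrank : Module.finrank ℝ (LinearMap.ker A.mulVecLin) = 1 := by
    rw [hker]
    exact finrank_span_singleton hone
  have hrankA : A.rank = Fintype.card S - 1 := by
    have := LinearMap.finrank_range_add_finrank_ker A.mulVecLin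
    rw [hkerrank, Module.finrank_pi] at this
    unfold Matrix.rank
    omega
  -- the sum functional and its kernel U
  let l : (S → ℝ) →ₗ[ℝ] ℝ :=
    { toFun := fun x => ∑ s, x s
      map_add' := fun x y => by simp [Finset.sum_add_distrib]
      map_smul' := fun c x => by simp [Finset.mul_sum] }
  have hlsurj : LinearMap.range l = ⊤ := by
    rw [LinearMap.range_eq_top]
    intro c
    refine ⟨fun _ => c / Fintype.card S, ?_⟩
    have : (Fintype.card S : ℝ) ≠ 0 := by
      exact_mod_cast Fintype.card_ne_zero
    simp [l]
    field_simp
  have hUrank : Module.finrank ℝ (LinearMap.ker l) = Fintype.card S - 1 := by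
    have h := LinearMap.finrank_range_add_finrank_ker l
    rw [hlsurj, finrank_top, Module.finrank_pi, Module.finrank_self] at h
    omega
  -- range of vecMul by A equals U
  let f : (S → ℝ) →ₗ[ℝ] (S → ℝ) := Aᵀ.mulVecLin
  have hf : ∀ x : S → ℝ, f x = x ᵥ* A := fun x => Matrix.mulVec_transpose A x
  have hrange_le : LinearMap.range f ≤ LinearMap.ker l := by
    rintro _ ⟨x, rfl⟩
    have : ∑ v, (x ᵥ* A) v = 0 := by
      have h1 : ∑ v, (x ᵥ* A) v = ∑ u, x u * ∑ v, A u v := by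
        simp only [vecMul, dotProduct]
        rw [Finset.sum_comm]
        congr 1; ext u; rw [Finset.mul_sum]
      rw [h1]
      simp [hArow]
    simpa [LinearMap.mem_ker, l, hf] using this
  have hrangerank : Module.finrank ℝ (LinearMap.range f) = Fintype.card S - 1 := by
    have h1 : Aᵀ.rank = A.rank := Matrix.rank_transpose A
    have h2 : Aᵀ.rank = Module.finrank ℝ (LinearMap.range f) := rfl
    rw [← h2, h1, hrankA]
  have hrange_eq : LinearMap.range f = LinearMap.ker l := by
    apply Submodule.eq_of_le_of_finrank_le hrange_le
    rw [hrangerank, hUrank]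
  -- the target vector b lies in U
  set b : S → ℝ := δ - μ ᵥ* P with hb
  have hbU : b ∈ LinearMap.ker l := by
    have hμP : ∑ v, (μ ᵥ* P) v = 1 := by
      have h1 : ∑ v, (μ ᵥ* P) v = ∑ u, μ u * ∑ v, P u v := by
        simp only [vecMul, dotProduct]
        rw [Finset.sum_comm]
        congr 1; ext u; rw [Finset.mul_sum]
      rw [h1]
      simp only [hrow, mul_one]
      exact hμ1
    have : ∑ v, b v = 0 := by
      rw [hb]
      simp only [Pi.sub_apply]
      rw [Finset.sum_sub_distrib, hδ1, hμP]
      ring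
    simpa [LinearMap.mem_ker, l] using this
  obtain ⟨x0, hx0⟩ : ∃ x0 : S → ℝ, x0 ᵥ* A = b := by
    rw [← hrange_eq] at hbU
    obtain ⟨x0, hx0⟩ := hbU
    exact ⟨x0, by rw [← hf, hx0]⟩
  -- existence of a nonzero left kernel vector
  have hdet : A.det = 0 := by
    rw [← Matrix.exists_mulVec_eq_zero_iff]
    exact ⟨_, hone, hAone⟩
  obtain ⟨γ0, hγ0ne, hγ0⟩ : ∃ γ0 : S → ℝ, γ0 ≠ 0 ∧ γ0 ᵥ* A = 0 := by
    obtain ⟨v, hv, hva⟩ := (Matrix.exists_vecMul_eq_zero_iff).mpr hdet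
    exact ⟨v, hv, hva⟩
  have hγ0P : γ0 ᵥ* P = γ0 := by
    have h2 : γ0 - γ0 ᵥ* P = 0 := by
      have := hγ0
      rwa [hAdef, Matrix.vecMul_sub, Matrix.vecMul_one] at this
    exact (sub_eq_zero.mp h2).symm
  -- |γ0| is also a left fixed vector
  set γ : S → ℝ := fun s => |γ0 s| with hγdef
  have hγnn : ∀ s, 0 ≤ γ s := fun s => abs_nonneg _
  have hγge : ∀ v, γ v ≤ ∑ u, γ u * P u v := by
    intro v
    have h1 : γ0 v = ∑ u, γ0 u * P u v := by
      have := congrFun hγ0P v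
      simp only [vecMul, dotProduct] at this
      linarith
    calc γ v = |∑ u, γ0 u * P u v| := by rw [hγdef]; simp [← h1]
      _ ≤ ∑ u, |γ0 u * P u v| := Finset.abs_sum_le_sum_abs _ _
      _ = ∑ u, γ u * P u v := by
          congr 1; ext u
          rw [abs_mul, abs_of_nonneg (hnn u v)]
  have hγsum : ∑ v, (∑ u, γ u * P u v) = ∑ v, γ v := by
    rw [Finset.sum_comm]
    congr 1; ext u
    rw [← Finset.mul_sum, hrow, mul_one]
  have hγP : γ ᵥ* P = γ := by
    funext v
    have hzero : ∀ w ∈ Finset.univ, (∑ u, γ u * P u w) - γ w = 0 := by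
      apply (Finset.sum_eq_zero_iff_of_nonneg (fun w _ => by linarith [hγge w])).mp
      rw [Finset.sum_sub_distrib, hγsum]
      ring
    have := hzero v (Finset.mem_univ v)
    simp only [vecMul, dotProduct]
    linarith
  -- γ is strictly positive everywhere
  obtain ⟨u1, hu1⟩ : ∃ u, 0 < γ u := by
    by_contra h
    push_neg at h
    apply hγ0ne
    funext s
    have := h s
    have h2 : γ s = 0 := le_antisymm this (hγnn s)
    have : |γ0 s| = 0 := h2
    simpa [abs_eq_zero] using this
  have hγpos : ∀ s, 0 < γ s := by
    intro s
    have path := hirr u1 s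
    induction path with
    | refl => exact hu1
    | tail hab' hab ih =>
        rename_i a b
        have hb' : γ b = ∑ u, γ u * P u b := by
          have := congrFun hγP b
          simp only [vecMul, dotProduct] at this
          linarith
        have hle : γ a * P a b ≤ ∑ u, γ u * P u b :=
          Finset.single_le_sum (f := fun u => γ u * P u b)
            (fun u _ => mul_nonneg (hγnn u) (hnn u b)) (Finset.mem_univ a)
        have hpos : 0 < γ a * P a b := mul_pos ih hab
        linarith [hb' ▸ hle]
  -- choose r large enough
  have hγA : γ ᵥ* A = 0 := by
    rw [hAdef, Matrix.vecMul_sub, Matrix.vecMul_one, hγP, sub_self]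
  obtain ⟨r, hr⟩ : ∃ r : ℝ, ∀ s, μ s - x0 s < r * γ s := by
    obtain ⟨s0, hs0⟩ := Finite.exists_max (fun s => (μ s - x0 s) / γ s)
    refine ⟨(μ s0 - x0 s0) / γ s0 + 1, fun s => ?_⟩
    have h1 : (μ s - x0 s) / γ s < (μ s0 - x0 s0) / γ s0 + 1 := by
      have := hs0 s
      linarith
    calc μ s - x0 s = ((μ s - x0 s) / γ s) * γ s :=
          (div_mul_cancel₀ _ (ne_of_gt (hγpos s))).symm
      _ < ((μ s0 - x0 s0) / γ s0 + 1) * γ s := by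
          exact mul_lt_mul_of_pos_right h1 (hγpos s)
  refine ⟨x0 + r • γ, ?_, fun s => ?_⟩
  · rw [Matrix.add_vecMul, Matrix.smul_vecMul, hγA, hx0]
    simp [hb]
  · have := hr s
    simp only [Pi.add_apply, Pi.smul_apply, smul_eq_mul]
    linarith
end

section
/- Let D = (S, δ, P) be a strongly connected finite discrete-time Markov chain with initial distribution δ. For every probability distribution μ over S there exists a vector λ ∈ [0,1]^S such that, in the modified Markov chain D_λ obtained from D by adding for each state s a fresh absorbing copy s' reached from s with probability λ(s) (all other transition probabilities from s rescaled by the factor (1 − λ(s))), the probability of eventually reaching s' when starting from δ equals μ(s) for every state s. -/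
/-!
Choose `z ≥ 0` with `z - z P = δ - μ`: for an irreducible stochastic `P` the image of
`z ↦ z (1 - P)` is the hyperplane of zero-sum vectors (by the maximum principle `1 - P` has
corank one, its kernel on column vectors being the constants), and adding a multiple of the
positive stationary vector makes a solution nonnegative. With `x = z + μ` and `λ = μ / x` one gets
`x = δ + (x (1 - λ)) P`, so `x` is a nonnegative solution of the occupation equation of `D_λ`
with sub-stochastic matrix `Q = diag (1 - λ) P`. The partial sums `δ ∑_{k<n} Q^k` increase to a
solution `σ ≤ x` of the same equation, so `x - σ` is a nonnegative `Q`-invariant vector; it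
vanishes because mass leaks wherever `λ > 0` and positivity spreads along the edges of `P`.
Hence the probability of exiting to `t'` is `λ t * x t = μ t`.
-/

/-- In the modified chain `D_λ` (each state `s` moves to its fresh absorbing copy `s'`
with probability `λ(s)`, other transitions rescaled by `1 - λ(s)`), this is the
probability of hitting the copy `t'` within `n` steps, starting from state `u`. -/
noncomputable def reachCopy {S : Type} [Fintype S] [DecidableEq S]
    (P : S → S → ℝ) (lam : S → ℝ) (t : S) : ℕ → S → ℝ
  | 0, _ => 0
  | n + 1, u =>
      (if u = t then lam t else 0) + (1 - lam u) * ∑ v, P u v * reachCopy P lam t n v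

open Finset Filter Topology Matrix

theorem Relation.ReflTransGen.of_invariant {α : Type*} {r : α → α → Prop} {Q : α → Prop}
    (h : ∀ a b, r a b → Q a → Q b) {a b : α} (hab : ReflTransGen r a b) (ha : Q a) : Q b := by
  induction hab with
  | refl => exact ha
  | tail _ hbc ih => exact h _ _ hbc ih

namespace Matrix

variable {S : Type*} [Fintype S]

lemma pos_of_vecMul_le {Q : Matrix S S ℝ} {x : S → ℝ} (hQ : ∀ u v, 0 ≤ Q u v) (hx : 0 ≤ x)
    {a b : S} (hle : (x ᵥ* Q) b ≤ x b) (ha : 0 < x a) (hab : 0 < Q a b) : 0 < x b :=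
  calc 0 < x a * Q a b := mul_pos ha hab
    _ ≤ (x ᵥ* Q) b :=
      single_le_sum (f := fun u => x u * Q u b) (fun u _ => mul_nonneg (hx u) (hQ u b))
        (mem_univ a)
    _ ≤ x b := hle

variable [DecidableEq S] {P : Matrix S S ℝ}

lemma sum_vecMul_of_mem_rowStochastic (hP : P ∈ rowStochastic ℝ S) (x : S → ℝ) :
    ∑ v, (x ᵥ* P) v = ∑ u, x u := by
  simpa [dotProduct_one, one_vecMul_of_mem_rowStochastic hP] using
    (dotProduct_mulVec x P 1).symm

lemma apply_eq_of_mulVec_eq_self (hP : P ∈ rowStochastic ℝ S)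
    (hconn : ∀ u v, Relation.ReflTransGen (fun a b => 0 < P a b) u v) {f : S → ℝ}
    (hf : P *ᵥ f = f) (u v : S) : f u = f v := by
  obtain ⟨m, -, hm⟩ := exists_max_image univ f ⟨u, mem_univ u⟩
  have hmax : ∀ a b, 0 < P a b → f a = f m → f b = f m := by
    intro a b hab ha
    by_contra hb
    have hlt : (P *ᵥ f) a < f m := by
      calc (P *ᵥ f) a = ∑ w, P a w * f w := rfl
        _ < ∑ w, P a w * f m :=
          sum_lt_sum (fun w _ => mul_le_mul_of_nonneg_left (hm w (mem_univ w)) (hP.1 a w))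
            ⟨b, mem_univ b, mul_lt_mul_of_pos_left
              ((hm b (mem_univ b)).lt_of_ne hb) hab⟩
        _ = f m := by rw [← sum_mul, sum_row_of_mem_rowStochastic hP, one_mul]
    rw [hf, ha] at hlt
    exact hlt.false
  rw [(hconn m u).of_invariant hmax rfl, (hconn m v).of_invariant hmax rfl]

lemma ker_mulVecLin_one_sub (hP : P ∈ rowStochastic ℝ S)
    (hconn : ∀ u v, Relation.ReflTransGen (fun a b => 0 < P a b) u v) :
    LinearMap.ker (1 - P).mulVecLin = ℝ ∙ 1 := by
  refine le_antisymm (fun f hf => ?_) ?_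
  · have hf : P *ᵥ f = f := by
      rw [LinearMap.mem_ker, mulVecLin_apply, sub_mulVec, one_mulVec, sub_eq_zero] at hf
      exact hf.symm
    obtain _ | ⟨⟨u⟩⟩ := isEmpty_or_nonempty S
    · simp [Subsingleton.elim f 0]
    · refine Submodule.mem_span_singleton.2 ⟨f u, funext fun v => ?_⟩
      simp [apply_eq_of_mulVec_eq_self hP hconn hf u v]
  · rw [Submodule.span_le, Set.singleton_subset_iff, SetLike.mem_coe, LinearMap.mem_ker,
      mulVecLin_apply, sub_mulVec, one_mulVec, one_vecMul_of_mem_rowStochastic hP, sub_self]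

lemma rank_one_sub_add_one [Nonempty S] (hP : P ∈ rowStochastic ℝ S)
    (hconn : ∀ u v, Relation.ReflTransGen (fun a b => 0 < P a b) u v) :
    (1 - P).rank + 1 = Fintype.card S := by
  have := LinearMap.finrank_range_add_finrank_ker (1 - P).mulVecLin
  rwa [ker_mulVecLin_one_sub hP hconn, finrank_span_singleton one_ne_zero,
    Module.finrank_fintype_fun_eq_card] at this

lemma exists_ne_zero_vecMul_eq_self [Nonempty S] (hP : P ∈ rowStochastic ℝ S)
    (hconn : ∀ u v, Relation.ReflTransGen (fun a b => 0 < P a b) u v) :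
    ∃ w ≠ 0, w ᵥ* P = w := by
  have hdim := LinearMap.finrank_range_add_finrank_ker (1 - P)ᵀ.mulVecLin
  rw [← rank, rank_transpose, Module.finrank_fintype_fun_eq_card,
    ← rank_one_sub_add_one hP hconn, add_left_cancel_iff] at hdim
  obtain ⟨w, hw, hw0⟩ := Submodule.exists_mem_ne_zero_of_ne_bot
    (Submodule.one_le_finrank_iff.1 hdim.ge)
  refine ⟨w, hw0, ?_⟩
  rw [LinearMap.mem_ker, mulVecLin_apply, mulVec_transpose, vecMul_sub, vecMul_one,
    sub_eq_zero] at hw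
  exact hw.symm

lemma exists_sub_vecMul_eq [Nonempty S] (hP : P ∈ rowStochastic ℝ S)
    (hconn : ∀ u v, Relation.ReflTransGen (fun a b => 0 < P a b) u v) {g : S → ℝ}
    (hg : ∑ s, g s = 0) : ∃ z, z - z ᵥ* P = g := by
  let H : Submodule ℝ (S → ℝ) := LinearMap.ker (∑ s, LinearMap.proj s)
  have hmem : ∀ f, f ∈ H ↔ ∑ s, f s = 0 := fun f => by simp [H]
  have hle : LinearMap.range (1 - P)ᵀ.mulVecLin ≤ H := by
    rintro _ ⟨z, rfl⟩
    rw [hmem, mulVecLin_apply, mulVec_transpose, vecMul_sub, vecMul_one]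
    simp [sum_sub_distrib, sum_vecMul_of_mem_rowStochastic hP]
  have hlt : H ≠ ⊤ := by
    intro h
    have := (hmem (Pi.single (Classical.arbitrary S) 1)).1 (h ▸ Submodule.mem_top)
    simp at this
  have hrange : LinearMap.range (1 - P)ᵀ.mulVecLin = H := by
    refine Submodule.eq_of_le_of_finrank_eq hle (le_antisymm (Submodule.finrank_mono hle) ?_)
    have := Submodule.finrank_lt hlt
    rw [Module.finrank_fintype_fun_eq_card, ← rank_one_sub_add_one hP hconn] at this
    rw [← rank, rank_transpose]
    omega
  obtain ⟨z, hz⟩ := hrange.ge ((hmem g).2 hg)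
  exact ⟨z, by rwa [mulVecLin_apply, mulVec_transpose, vecMul_sub, vecMul_one] at hz⟩

lemma exists_pos_vecMul_eq_self [Nonempty S] (hP : P ∈ rowStochastic ℝ S)
    (hconn : ∀ u v, Relation.ReflTransGen (fun a b => 0 < P a b) u v) :
    ∃ π : S → ℝ, (∀ s, 0 < π s) ∧ π ᵥ* P = π := by
  obtain ⟨w, hw0, hw⟩ := exists_ne_zero_vecMul_eq_self hP hconn
  set π : S → ℝ := fun s => |w s|
  have hle : π ≤ π ᵥ* P := fun t =>
    calc π t = |(w ᵥ* P) t| := by rw [hw]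
      _ ≤ ∑ u, |w u * P u t| := abs_sum_le_sum_abs _ _
      _ = (π ᵥ* P) t := sum_congr rfl fun u _ => by rw [abs_mul, abs_of_nonneg (hP.1 u t)]
  -- equality in the triangle inequality: both sides have the same total mass
  have hstat : π ᵥ* P = π := by
    refine (funext fun t => ?_).symm
    refine ((sum_eq_sum_iff_of_le fun t _ => hle t).1 ?_ t (mem_univ t))
    exact (sum_vecMul_of_mem_rowStochastic hP π).symm
  obtain ⟨t, ht⟩ : ∃ t, 0 < π t := by
    by_contra! h
    exact hw0 (funext fun s => abs_nonpos_iff.1 (h s))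
  have hstep : ∀ a b, 0 < P a b → 0 < π a → 0 < π b := fun a b hab ha =>
    pos_of_vecMul_le hP.1 (fun s => abs_nonneg (w s)) (hstat.le b) ha hab
  exact ⟨π, fun s => (hconn t s).of_invariant hstep ht, hstat⟩

lemma exists_nonneg_sub_vecMul_eq [Nonempty S] (hP : P ∈ rowStochastic ℝ S)
    (hconn : ∀ u v, Relation.ReflTransGen (fun a b => 0 < P a b) u v) {g : S → ℝ}
    (hg : ∑ s, g s = 0) : ∃ z, 0 ≤ z ∧ z - z ᵥ* P = g := by
  obtain ⟨z, hz⟩ := exists_sub_vecMul_eq hP hconn hg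
  obtain ⟨π, hπ, hπP⟩ := exists_pos_vecMul_eq_self hP hconn
  obtain ⟨c, hc⟩ := Finite.bddAbove_range fun s => -z s / π s
  refine ⟨z + c • π, fun s => ?_, ?_⟩
  · have := (div_le_iff₀ (hπ s)).1 (hc ⟨s, rfl⟩)
    simp only [Pi.zero_apply, Pi.add_apply, Pi.smul_apply, smul_eq_mul]
    linarith
  · rw [add_vecMul, smul_vecMul, hπP, ← hz]
    abel

lemma monotone_vecMul_geom_sum {Q : Matrix S S ℝ} (hQ : ∀ u v, 0 ≤ Q u v) {δ : S → ℝ}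
    (hδ : 0 ≤ δ) : Monotone fun n => δ ᵥ* ∑ k ∈ range n, Q ^ k := by
  refine monotone_nat_of_le_succ fun n s => ?_
  have hpow : ∀ k, ∀ u v, 0 ≤ (Q ^ k) u v := fun k => by
    induction k with
    | zero => intro u v; rw [pow_zero, one_apply]; split_ifs <;> norm_num
    | succ k ih =>
      intro u v
      rw [pow_succ]
      exact sum_nonneg fun w _ => mul_nonneg (ih u w) (hQ w v)
  simp only [sum_range_succ, vecMul_add, Pi.add_apply, le_add_iff_nonneg_right]
  exact sum_nonneg fun u _ => mul_nonneg (hδ u) (hpow n u s)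

lemma tendsto_vecMul_geom_sum {Q : Matrix S S ℝ} (hQ : ∀ u v, 0 ≤ Q u v)
    (hQ₀ : ∀ d, 0 ≤ d → d ᵥ* Q = d → d = 0) {δ x : S → ℝ} (hδ : 0 ≤ δ) (hx : 0 ≤ x)
    (hfix : δ + x ᵥ* Q = x) :
    Tendsto (fun n => δ ᵥ* ∑ k ∈ range n, Q ^ k) atTop (𝓝 x) := by
  set G : ℕ → S → ℝ := fun n => δ ᵥ* ∑ k ∈ range n, Q ^ k
  have hG : ∀ n, G (n + 1) = δ + G n ᵥ* Q := fun n => by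
    simp only [G, sum_range_succ', pow_succ, ← sum_mul, pow_zero, vecMul_add, vecMul_one,
      ← vecMul_vecMul, add_comm]
  have hGx : ∀ n, G n ≤ x := fun n => by
    induction n with
    | zero => simpa [G] using hx
    | succ n ih =>
      rw [hG, ← hfix]
      exact add_le_add_right
        (fun t => sum_le_sum fun u _ => mul_le_mul_of_nonneg_right (ih u) (hQ u t)) δ
  have hlim := tendsto_atTop_ciSup (monotone_vecMul_geom_sum hQ hδ)
    ⟨x, by simpa [upperBounds] using hGx⟩
  set σ := ⨆ n, G n
  have hσ : δ + σ ᵥ* Q = σ := by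
    refine tendsto_nhds_unique (f := fun n => G (n + 1)) ?_
      ((tendsto_add_atTop_iff_nat 1).2 hlim)
    simp only [hG]
    exact tendsto_const_nhds.add
      (((continuous_id.matrix_vecMul continuous_const).tendsto σ).comp hlim)
  have hσx : σ ≤ x := ciSup_le hGx
  have : x - σ = 0 := hQ₀ _ (sub_nonneg.2 hσx) (by
    rw [sub_vecMul]; linear_combination hfix - hσ)
  rwa [sub_eq_zero.1 this]

lemma nonneg_diagonal_one_sub_mul {P : Matrix S S ℝ} (hP : P ∈ rowStochastic ℝ S)
    {lam : S → ℝ} (hlam₁ : lam ≤ 1) (u v : S) :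
    0 ≤ (diagonal (1 - lam) * P : Matrix S S ℝ) u v := by
  rw [diagonal_mul]
  exact mul_nonneg (sub_nonneg.2 (hlam₁ u)) (hP.1 u v)

lemma eq_zero_of_vecMul_diagonal_mul_eq_self {P : Matrix S S ℝ} (hP : P ∈ rowStochastic ℝ S)
    (hconn : ∀ u v, Relation.ReflTransGen (fun a b => 0 < P a b) u v) {lam : S → ℝ}
    (hlam₀ : 0 ≤ lam) (hlam₁ : lam ≤ 1) {t : S} (ht : lam t ≠ 0) {d : S → ℝ} (hd : 0 ≤ d)
    (hfix : d ᵥ* (diagonal (1 - lam) * P) = d) : d = 0 := by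
  have hQ := nonneg_diagonal_one_sub_mul hP hlam₁
  -- the mass lost per step is `∑ d * lam`, but `d` is invariant
  have hlost : ∀ u, d u * lam u = 0 := by
    have := sum_vecMul_of_mem_rowStochastic hP (d ᵥ* diagonal (1 - lam))
    simp only [vecMul_vecMul, hfix, vecMul_diagonal, Pi.sub_apply, Pi.one_apply, mul_one_sub,
      sum_sub_distrib] at this
    exact fun u => (sum_eq_zero_iff_of_nonneg fun u _ => mul_nonneg (hd u) (hlam₀ u)).1
      (by linarith) u (mem_univ u)
  have hstep : ∀ a b, 0 < P a b → 0 < d a → 0 < d b := fun a b hab ha => by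
    have hla : lam a = 0 := (mul_eq_zero.1 (hlost a)).resolve_left ha.ne'
    refine pos_of_vecMul_le hQ hd (hfix.le b) ha ?_
    simpa [diagonal_mul, hla] using hab
  funext s
  by_contra hs
  have hdt := (hconn s t).of_invariant hstep ((hd s).lt_of_ne (Ne.symm hs))
  exact ht ((mul_eq_zero.1 (hlost t)).resolve_left hdt.ne')

end Matrix

section
variable {S : Type} [Fintype S] [DecidableEq S]

lemma reachCopy_eq_geom_sum_mulVec (P : Matrix S S ℝ) (lam : S → ℝ) (t : S) (n : ℕ) :
    reachCopy P lam t n =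
      (∑ k ∈ range n, (diagonal (1 - lam) * P) ^ k) *ᵥ Pi.single t (lam t) := by
  induction n with
  | zero => funext u; simp [reachCopy]
  | succ n ih =>
    have hstep : reachCopy P lam t (n + 1) =
        Pi.single t (lam t) + (diagonal (1 - lam) * P) *ᵥ reachCopy P lam t n := by
      funext u
      simp [reachCopy, Pi.single_apply, mulVec, dotProduct, diagonal_mul, mul_sum, mul_assoc]
    rw [hstep, ih, geom_sum_succ, add_mulVec, one_mulVec, mulVec_mulVec, add_comm]

lemma iSup_sum_mul_reachCopy {P : Matrix S S ℝ} (hP : P ∈ rowStochastic ℝ S)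
    (hconn : ∀ u v, Relation.ReflTransGen (fun a b => 0 < P a b) u v) {δ lam x : S → ℝ}
    (hδ : 0 ≤ δ) (hlam₀ : 0 ≤ lam) (hlam₁ : lam ≤ 1) {t₀ : S} (ht₀ : lam t₀ ≠ 0) (hx : 0 ≤ x)
    (hfix : δ + (x * (1 - lam)) ᵥ* P = x) (t : S) :
    ⨆ n, ∑ s, δ s * reachCopy P lam t n s = lam t * x t := by
  set Q := diagonal (1 - lam) * P
  have hQ := nonneg_diagonal_one_sub_mul hP hlam₁
  have hterm : ∀ n, ∑ s, δ s * reachCopy P lam t n s =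
      lam t * (δ ᵥ* ∑ k ∈ range n, Q ^ k) t := fun n => by
    change δ ⬝ᵥ reachCopy P lam t n = _
    rw [reachCopy_eq_geom_sum_mulVec, dotProduct_mulVec, dotProduct_single, mul_comm]
  have hfixQ : δ + x ᵥ* Q = x := by
    rwa [← vecMul_vecMul, show x ᵥ* diagonal (1 - lam) = x * (1 - lam) from
      funext fun s => vecMul_diagonal x (1 - lam) s]
  have hlim := tendsto_vecMul_geom_sum hQ
    (fun d hd hdQ => eq_zero_of_vecMul_diagonal_mul_eq_self hP hconn hlam₀ hlam₁ ht₀ hd hdQ)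
    hδ hx hfixQ
  simp only [hterm]
  refine (isLUB_of_tendsto_atTop (fun m n hmn => ?_) ?_).ciSup_eq
  · exact mul_le_mul_of_nonneg_left (monotone_vecMul_geom_sum hQ hδ hmn t) (hlam₀ t)
  · exact (((continuous_apply t).tendsto x).comp hlim).const_mul (lam t)

end

/-- For a strongly connected DTMC `(S, δ, P)` and any distribution `μ` over `S`, there
is a vector `λ ∈ [0,1]^S` such that in `D_λ` the probability of eventually reaching the
copy `t'` (starting from `δ`) equals `μ(t)` for every state `t`. -/
theorem dtmc_exit_frequencies {S : Type} [Fintype S] [DecidableEq S] [Nonempty S]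
    (P : S → S → ℝ) (δ : S → ℝ)
    (hnn : ∀ u v, 0 ≤ P u v) (hrow : ∀ u, ∑ v, P u v = 1)
    (hconn : ∀ u v, Relation.ReflTransGen (fun a b => 0 < P a b) u v)
    (hδnn : ∀ s, 0 ≤ δ s) (hδ1 : ∑ s, δ s = 1)
    (μ : S → ℝ) (hμnn : ∀ s, 0 ≤ μ s) (hμ1 : ∑ s, μ s = 1) :
    ∃ lam : S → ℝ, (∀ s, 0 ≤ lam s ∧ lam s ≤ 1) ∧
      ∀ t, (⨆ n : ℕ, ∑ s, δ s * reachCopy P lam t n s) = μ t := by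
  have hP : P ∈ rowStochastic ℝ S := mem_rowStochastic_iff_sum.2 ⟨hnn, hrow⟩
  obtain ⟨z, hz₀, hz⟩ := exists_nonneg_sub_vecMul_eq hP hconn (g := δ - μ)
    (by simp [sum_sub_distrib, hδ1, hμ1])
  -- `z + μ` will be the expected number of visits in `D_λ`, `z` those not followed by an exit
  have hx₀ : ∀ s, 0 ≤ z s + μ s := fun s => add_nonneg (hz₀ s) (hμnn s)
  have hμx : ∀ s, z s + μ s = 0 → μ s = 0 := fun s hs =>
    ((add_eq_zero_iff_of_nonneg (hz₀ s) (hμnn s)).1 hs).2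
  have hlam₀ : 0 ≤ μ / (z + μ) := fun s => div_nonneg (hμnn s) (hx₀ s)
  have hμz : ∀ s, μ s ≤ z s + μ s := fun s => le_add_of_nonneg_left (hz₀ s)
  have hlam₁ : μ / (z + μ) ≤ 1 := fun s => div_le_one_of_le₀ (hμz s) (hx₀ s)
  have hfix : δ + ((z + μ) * (1 - μ / (z + μ))) ᵥ* P = z + μ := by
    have hcont : (z + μ) * (1 - μ / (z + μ)) = z := funext fun s => by
      simp only [Pi.mul_apply, Pi.sub_apply, Pi.one_apply, Pi.div_apply, Pi.add_apply,
        mul_one_sub, mul_div_cancel_of_imp' (hμx s), add_sub_cancel_right]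
    rw [hcont]
    linear_combination -hz
  obtain ⟨t₀, ht₀⟩ : ∃ t, 0 < μ t := by
    by_contra! h
    linarith [sum_nonpos fun s (_ : s ∈ univ) => h s]
  refine ⟨μ / (z + μ), fun s => ⟨hlam₀ s, hlam₁ s⟩, fun t => ?_⟩
  rw [iSup_sum_mul_reachCopy hP hconn hδnn hlam₀ hlam₁
    (div_pos ht₀ (ht₀.trans_le (hμz t₀))).ne' hx₀ hfix, Pi.div_apply, Pi.add_apply,
    div_mul_cancel_of_imp (hμx t)]
end

section
/- Let M be a finite MDP with a distinguished set of absorbing target states, let M' be a subsystem of M (obtained by removing some states and redirecting removed transitions to a fresh absorbing state ⊥), and let Φ be a multi-objective property that is a Boolean combination of lower-bounded reachability and invariance predicates Pr^σ(◇G_i) ≥ λ_i, Pr^σ(□G_j) ≥ ξ_j. If there exists a scheduler σ' for M' satisfying Φ, then there exists a scheduler σ for M satisfying Φ. -/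
open Finset

structure MDP (S A : Type) [Fintype S] [Fintype A] where
  init : S
  trans : S → A → Option (S → ℝ)
  nonneg' : ∀ s a f, trans s a = some f → ∀ t, 0 ≤ f t
  sum_one' : ∀ s a f, trans s a = some f → ∑ t, f t = 1
  exists_enabled : ∀ s, ∃ a, (trans s a).isSome

namespace MDP

variable {S A : Type} [Fintype S] [Fintype A]

/-- action `a` is enabled in state `s`. -/
def enabled (M : MDP S A) (s : S) (a : A) : Prop := (M.trans s a).isSome

/-- transition probability (0 if the action is not enabled). -/
noncomputable def prob (M : MDP S A) (s : S) (a : A) (t : S) : ℝ :=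
  ((M.trans s a).getD 0) t

/-- A (history-dependent, randomized) scheduler. -/
structure Scheduler (M : MDP S A) where
  choice : List (S × A) → S → A → ℝ
  choice_nonneg : ∀ h s a, 0 ≤ choice h s a
  choice_sum_one : ∀ h s, ∑ a, choice h s a = 1
  choice_support : ∀ h s a, choice h s a ≠ 0 → M.enabled s a

variable [DecidableEq S]

/-- probability of reaching `G` within `n` steps, from history `h` and current state `s`. -/
noncomputable def reachAux (M : MDP S A) (σ : Scheduler M) (G : Finset S) :
    ℕ → List (S × A) → S → ℝ
  | 0, _, s => if s ∈ G then 1 else 0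
  | n + 1, h, s =>
      if s ∈ G then 1
      else ∑ a : A, σ.choice h s a * ∑ t : S, M.prob s a t * reachAux M σ G n (h ++ [(s, a)]) t

/-- probability of eventually reaching `G`, starting in `s`. -/
noncomputable def prReachFrom (M : MDP S A) (σ : Scheduler M) (G : Finset S) (s : S) : ℝ :=
  ⨆ n : ℕ, reachAux M σ G n [] s

/-- probability of eventually reaching `G` from the initial state. -/
noncomputable def prReach (M : MDP S A) (σ : Scheduler M) (G : Finset S) : ℝ :=
  prReachFrom M σ G M.init

/-- probability of staying in `G` for the first `n` steps. -/
noncomputable def invAux (M : MDP S A) (σ : Scheduler M) (G : Finset S) :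
    ℕ → List (S × A) → S → ℝ
  | 0, _, s => if s ∈ G then 1 else 0
  | n + 1, h, s =>
      if s ∈ G then
        ∑ a : A, σ.choice h s a * ∑ t : S, M.prob s a t * invAux M σ G n (h ++ [(s, a)]) t
      else 0

/-- probability of always remaining in `G`, from the initial state. -/
noncomputable def prInv (M : MDP S A) (σ : Scheduler M) (G : Finset S) : ℝ :=
  ⨅ n : ℕ, invAux M σ G n [] M.init

/-- expected total reward collected in the first `n` steps. -/
noncomputable def expTotal (M : MDP S A) (σ : Scheduler M) (r : S → A → ℝ) :
    ℕ → List (S × A) → S → ℝ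
  | 0, _, _ => 0
  | n + 1, h, s =>
      ∑ a : A, σ.choice h s a *
        (r s a + ∑ t : S, M.prob s a t * expTotal M σ r n (h ++ [(s, a)]) t)

/-- expected (liminf) mean payoff under scheduler `σ`. -/
noncomputable def expMPinf (M : MDP S A) (σ : Scheduler M) (r : S → A → ℝ) : ℝ :=
  Filter.liminf (fun n : ℕ => expTotal M σ r n [] M.init / n) Filter.atTop

/-- expected (limsup) mean payoff under scheduler `σ`. -/
noncomputable def expMPsup (M : MDP S A) (σ : Scheduler M) (r : S → A → ℝ) : ℝ :=
  Filter.limsup (fun n : ℕ => expTotal M σ r n [] M.init / n) Filter.atTop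

/-- `M'` (with fresh sink `⊥ = none`) is a subsystem of `M` with state set `S' ∪ {⊥}`. -/
def IsSubsystem (M : MDP S A) (S' : Finset S) (M' : MDP (Option S) A) : Prop :=
  M.init ∈ S' ∧ M'.init = some M.init ∧
  (∀ a, M'.enabled none a → ∀ t, M'.prob none a t = if t = none then 1 else 0) ∧
  (∀ s ∈ S', ∀ a, (M'.enabled (some s) a ↔ M.enabled s a)) ∧
  (∀ s ∈ S', ∀ t ∈ S', ∀ a,
    M'.prob (some s) a (some t) = M.prob s a t ∨ M'.prob (some s) a (some t) = 0) ∧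
  (∀ s ∈ S', ∀ t, t ∉ S' → ∀ a, M'.prob (some s) a (some t) = 0)

/-- `M'` is the subsystem of `M` induced by `S'`: transitions leaving `S'` are
redirected to the absorbing sink `⊥ = none`. -/
def IsInducedSubsystem (M : MDP S A) (S' : Finset S) (M' : MDP (Option S) A) : Prop :=
  M.init ∈ S' ∧ M'.init = some M.init ∧
  (∀ a, M'.enabled none a → ∀ t, M'.prob none a t = if t = none then 1 else 0) ∧
  (∀ s ∈ S', ∀ a, (M'.enabled (some s) a ↔ M.enabled s a)) ∧
  (∀ s ∈ S', ∀ t ∈ S', ∀ a, M'.prob (some s) a (some t) = M.prob s a t) ∧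
  (∀ s ∈ S', ∀ t, t ∉ S' → ∀ a, M'.prob (some s) a (some t) = 0) ∧
  (∀ s ∈ S', ∀ a, M.enabled s a → M'.prob (some s) a none = ∑ t ∈ S'ᶜ, M.prob s a t)

/-- `C` is an end component of `M`. -/
def IsEC (M : MDP S A) (C : Finset (S × A)) : Prop :=
  C.Nonempty ∧ (∀ p ∈ C, M.enabled p.1 p.2) ∧
  (∀ p ∈ C, ∀ t, 0 < M.prob p.1 p.2 t → t ∈ C.image Prod.fst) ∧
  (∀ s ∈ C.image Prod.fst, ∀ t ∈ C.image Prod.fst,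
    Relation.ReflTransGen (fun u v => ∃ a, (u, a) ∈ C ∧ 0 < M.prob u a v) s t)

end MDP

/-- positive boolean combinations of lower-bounded reachability and invariance
predicates; the flag `strict` distinguishes `>` from `≥`. -/
inductive MOProp (S : Type) where
  | reach (G : Finset S) (lam : ℝ) (strict : Bool)
  | invar (G : Finset S) (lam : ℝ) (strict : Bool)
  | conj (p q : MOProp S)
  | disj (p q : MOProp S)

namespace MDP

variable {S A : Type} [Fintype S] [Fintype A] [DecidableEq S]

/-- satisfaction of a multi-objective property in `M` under `σ`. -/
def Sat (M : MDP S A) (σ : Scheduler M) : MOProp S → Prop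
  | .reach G lam strict => if strict then lam < prReach M σ G else lam ≤ prReach M σ G
  | .invar G lam strict => if strict then lam < prInv M σ G else lam ≤ prInv M σ G
  | .conj p q => Sat M σ p ∧ Sat M σ q
  | .disj p q => Sat M σ p ∨ Sat M σ q

/-- satisfaction of a multi-objective property (over the original state space) in a
subsystem `M'` with sink `⊥ = none`. -/
def SatSub (M' : MDP (Option S) A) (σ : Scheduler M') : MOProp S → Prop
  | .reach G lam strict =>
      if strict then lam < prReach M' σ (G.image some) else lam ≤ prReach M' σ (G.image some)
  | .invar G lam strict =>
      if strict then lam < prInv M' σ (G.image some) else lam ≤ prInv M' σ (G.image some)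
  | .conj p q => SatSub M' σ p ∧ SatSub M' σ q
  | .disj p q => SatSub M' σ p ∨ SatSub M' σ q

end MDP

section Aux

open scoped Classical

namespace MDPAux

open MDP

variable {S A : Type} [Fintype S] [Fintype A] [DecidableEq S]

lemma prob_nonneg (M : MDP S A) (s : S) (a : A) (t : S) : 0 ≤ M.prob s a t := by
  unfold MDP.prob
  cases h : M.trans s a with
  | none => simp
  | some f => simpa using M.nonneg' s a f h t

lemma sum_prob_le_one (M : MDP S A) (s : S) (a : A) : ∑ t, M.prob s a t ≤ 1 := by
  by_cases h : (M.trans s a).isSome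
  · rw [Option.isSome_iff_exists] at h
    obtain ⟨f, hf⟩ := h
    simp only [MDP.prob, hf, Option.getD_some]
    rw [M.sum_one' s a f hf]
  · rw [Option.not_isSome_iff_eq_none] at h
    simp [MDP.prob, h]

lemma reachAux_nonneg (M : MDP S A) (σ : M.Scheduler) (G : Finset S) :
    ∀ n h s, 0 ≤ reachAux M σ G n h s := by
  intro n
  induction n with
  | zero => intro h s; simp only [reachAux]; split <;> norm_num
  | succ n ih =>
    intro h s
    rw [reachAux]
    split
    · norm_num
    · refine Finset.sum_nonneg fun a _ => mul_nonneg (σ.choice_nonneg h s a) ?_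
      exact Finset.sum_nonneg fun t _ => mul_nonneg (prob_nonneg M s a t) (ih _ t)

lemma reachAux_le_one (M : MDP S A) (σ : M.Scheduler) (G : Finset S) :
    ∀ n h s, reachAux M σ G n h s ≤ 1 := by
  intro n
  induction n with
  | zero => intro h s; simp only [reachAux]; split <;> norm_num
  | succ n ih =>
    intro h s
    rw [reachAux]
    split
    · norm_num
    · calc ∑ a : A, σ.choice h s a *
            ∑ t : S, M.prob s a t * reachAux M σ G n (h ++ [(s, a)]) t
          ≤ ∑ a : A, σ.choice h s a * 1 := by
            refine Finset.sum_le_sum fun a _ => ?_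
            refine mul_le_mul_of_nonneg_left ?_ (σ.choice_nonneg h s a)
            calc ∑ t : S, M.prob s a t * reachAux M σ G n (h ++ [(s, a)]) t
                ≤ ∑ t : S, M.prob s a t * 1 := by
                  refine Finset.sum_le_sum fun t _ => ?_
                  exact mul_le_mul_of_nonneg_left (ih _ t) (prob_nonneg M s a t)
              _ ≤ 1 := by simpa using sum_prob_le_one M s a
        _ = 1 := by simpa using σ.choice_sum_one h s

lemma invAux_nonneg (M : MDP S A) (σ : M.Scheduler) (G : Finset S) :
    ∀ n h s, 0 ≤ invAux M σ G n h s := by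
  intro n
  induction n with
  | zero => intro h s; simp only [invAux]; split <;> norm_num
  | succ n ih =>
    intro h s
    rw [invAux]
    split
    · refine Finset.sum_nonneg fun a _ => mul_nonneg (σ.choice_nonneg h s a) ?_
      exact Finset.sum_nonneg fun t _ => mul_nonneg (prob_nonneg M s a t) (ih _ t)
    · norm_num

variable (M : MDP S A) (S' : Finset S) (M' : MDP (Option S) A)

/-- the scheduler of `M` mimicking a scheduler of the subsystem `M'`. -/
noncomputable def lift (hsub : M.IsSubsystem S' M') (σ' : M'.Scheduler) : M.Scheduler where
  choice h s a :=
    if s ∈ S' then σ'.choice (h.map (fun p => (some p.1, p.2))) (some s) a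
    else if a = (M.exists_enabled s).choose then 1 else 0
  choice_nonneg h s a := by
    split
    · exact σ'.choice_nonneg _ _ a
    · split <;> norm_num
  choice_sum_one h s := by
    split
    · exact σ'.choice_sum_one _ _
    · simp [Finset.sum_ite_eq']
  choice_support h s a hne := by
    by_cases hs : s ∈ S'
    · rw [if_pos hs] at hne
      exact (hsub.2.2.2.1 s hs a).mp (σ'.choice_support _ _ a hne)
    · rw [if_neg hs] at hne
      have ha : a = (M.exists_enabled s).choose := by
        by_contra hc; rw [if_neg hc] at hne; exact hne rfl
      rw [ha]
      exact (M.exists_enabled s).choose_spec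

variable {M S' M'} (hsub : M.IsSubsystem S' M') (σ' : M'.Scheduler) (G : Finset S)

include hsub in
lemma reachAux_none :
    ∀ n h, reachAux M' σ' (G.image some) n h none = 0 := by
  intro n
  have hnone : (none : Option S) ∉ G.image some := by simp
  induction n with
  | zero => intro h; rw [reachAux, if_neg hnone]
  | succ n ih =>
    intro h
    rw [reachAux, if_neg hnone]
    refine Finset.sum_eq_zero fun a _ => ?_
    by_cases hc : σ'.choice h none a = 0
    · rw [hc, zero_mul]
    · have hen := σ'.choice_support h none a hc
      have hp := hsub.2.2.1 a hen
      have : ∑ t : Option S,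
          M'.prob none a t * reachAux M' σ' (G.image some) n (h ++ [(none, a)]) t = 0 := by
        rw [Finset.sum_eq_single (none : Option S)]
        · rw [ih, mul_zero]
        · intro b _ hb; rw [hp b, if_neg hb, zero_mul]
        · simp
      rw [this, mul_zero]

lemma invAux_none :
    ∀ n h, invAux M' σ' (G.image some) n h none = 0 := by
  have hnone : (none : Option S) ∉ G.image some := by simp
  intro n h
  cases n with
  | zero => rw [invAux, if_neg hnone]
  | succ n => rw [invAux, if_neg hnone]

lemma reachAux_transfer :
    ∀ n (h : List (S × A)) s, s ∈ S' →
      reachAux M' σ' (G.image some) n (h.map (fun p => (some p.1, p.2))) (some s)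
        ≤ reachAux M (lift M S' M' hsub σ') G n h s := by
  intro n
  induction n with
  | zero =>
    intro h s hs
    by_cases hG : s ∈ G <;> simp [reachAux, hG]
  | succ n ih =>
    intro h s hs
    by_cases hG : s ∈ G
    · have : (some s) ∈ G.image some := Finset.mem_image_of_mem some hG
      simp [reachAux, hG, this]
    · have hG' : (some s) ∉ G.image some := by simp [hG]
      rw [reachAux, reachAux, if_neg hG', if_neg hG]
      refine Finset.sum_le_sum fun a _ => ?_
      have hceq : (lift M S' M' hsub σ').choice h s a
          = σ'.choice (h.map (fun p => (some p.1, p.2))) (some s) a := by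
        simp only [lift, if_pos hs]
      rw [← hceq]
      refine mul_le_mul_of_nonneg_left ?_ ((lift M S' M' hsub σ').choice_nonneg h s a)
      have hmap : h.map (fun p : S × A => (some p.1, p.2)) ++ [((some s : Option S), a)]
          = (h ++ [(s, a)]).map (fun p : S × A => (some p.1, p.2)) := by simp
      rw [hmap, Fintype.sum_option, reachAux_none hsub σ' G, mul_zero, zero_add]
      refine Finset.sum_le_sum fun t _ => ?_
      by_cases ht : t ∈ S'
      · rcases hsub.2.2.2.2.1 s hs t ht a with hp | hp
        · rw [hp]
          exact mul_le_mul_of_nonneg_left (ih (h ++ [(s, a)]) t ht) (prob_nonneg M s a t)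
        · rw [hp, zero_mul]
          exact mul_nonneg (prob_nonneg M s a t)
            (reachAux_nonneg M (lift M S' M' hsub σ') G n _ t)
      · rw [hsub.2.2.2.2.2 s hs t ht a, zero_mul]
        exact mul_nonneg (prob_nonneg M s a t)
          (reachAux_nonneg M (lift M S' M' hsub σ') G n _ t)

lemma invAux_transfer :
    ∀ n (h : List (S × A)) s, s ∈ S' →
      invAux M' σ' (G.image some) n (h.map (fun p => (some p.1, p.2))) (some s)
        ≤ invAux M (lift M S' M' hsub σ') G n h s := by
  intro n
  induction n with
  | zero =>
    intro h s hs
    by_cases hG : s ∈ G <;> simp [invAux, hG]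
  | succ n ih =>
    intro h s hs
    by_cases hG : s ∈ G
    · have hG' : (some s) ∈ G.image some := Finset.mem_image_of_mem some hG
      rw [invAux, invAux, if_pos hG', if_pos hG]
      refine Finset.sum_le_sum fun a _ => ?_
      have hceq : (lift M S' M' hsub σ').choice h s a
          = σ'.choice (h.map (fun p => (some p.1, p.2))) (some s) a := by
        simp only [lift, if_pos hs]
      rw [← hceq]
      refine mul_le_mul_of_nonneg_left ?_ ((lift M S' M' hsub σ').choice_nonneg h s a)
      have hmap : h.map (fun p : S × A => (some p.1, p.2)) ++ [((some s : Option S), a)]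
          = (h ++ [(s, a)]).map (fun p : S × A => (some p.1, p.2)) := by simp
      rw [hmap, Fintype.sum_option, invAux_none σ' G, mul_zero, zero_add]
      refine Finset.sum_le_sum fun t _ => ?_
      by_cases ht : t ∈ S'
      · rcases hsub.2.2.2.2.1 s hs t ht a with hp | hp
        · rw [hp]
          exact mul_le_mul_of_nonneg_left (ih (h ++ [(s, a)]) t ht) (prob_nonneg M s a t)
        · rw [hp, zero_mul]
          exact mul_nonneg (prob_nonneg M s a t)
            (invAux_nonneg M (lift M S' M' hsub σ') G n _ t)
      · rw [hsub.2.2.2.2.2 s hs t ht a, zero_mul]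
        exact mul_nonneg (prob_nonneg M s a t)
          (invAux_nonneg M (lift M S' M' hsub σ') G n _ t)
    · have hG' : (some s) ∉ G.image some := by simp [hG]
      rw [invAux, invAux, if_neg hG', if_neg hG]

lemma prReach_transfer :
    prReach M' σ' (G.image some) ≤ prReach M (lift M S' M' hsub σ') G := by
  unfold prReach prReachFrom
  rw [hsub.2.1]
  refine ciSup_mono ⟨1, ?_⟩ fun n => ?_
  · rintro x ⟨n, rfl⟩
    exact reachAux_le_one M (lift M S' M' hsub σ') G n [] M.init
  · exact reachAux_transfer hsub σ' G n [] M.init hsub.1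

lemma prInv_transfer :
    prInv M' σ' (G.image some) ≤ prInv M (lift M S' M' hsub σ') G := by
  unfold prInv
  rw [hsub.2.1]
  refine ciInf_mono ⟨0, ?_⟩ fun n => ?_
  · rintro x ⟨n, rfl⟩
    exact invAux_nonneg M' σ' (G.image some) n [] (some M.init)
  · exact invAux_transfer hsub σ' G n [] M.init hsub.1

lemma sat_transfer :
    ∀ Φ : MOProp S, SatSub M' σ' Φ → Sat M (lift M S' M' hsub σ') Φ := by
  intro Φ
  induction Φ with
  | reach G lam strict =>
    intro hΦ
    cases strict <;>
      simp only [Sat, SatSub, if_true, if_false, Bool.false_eq_true, ite_true, ite_false] at hΦ ⊢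
    · exact hΦ.trans (prReach_transfer hsub σ' G)
    · exact hΦ.trans_le (prReach_transfer hsub σ' G)
  | invar G lam strict =>
    intro hΦ
    cases strict <;>
      simp only [Sat, SatSub, if_true, if_false, Bool.false_eq_true, ite_true, ite_false] at hΦ ⊢
    · exact hΦ.trans (prInv_transfer hsub σ' G)
    · exact hΦ.trans_le (prInv_transfer hsub σ' G)
  | conj p q ihp ihq => exact fun hΦ => ⟨ihp hΦ.1, ihq hΦ.2⟩
  | disj p q ihp ihq => exact fun hΦ => hΦ.imp ihp ihq

end MDPAux

end Aux

/-- If some scheduler of a subsystem `M'` of `M` satisfies a positive boolean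
combination `Φ` of lower-bounded reachability and invariance predicates, then some
scheduler of `M` satisfies `Φ`. -/
theorem subsystem_exists_transfer {S A : Type} [Fintype S] [Fintype A] [DecidableEq S]
    (M : MDP S A) (F : Finset S)
    (habs : ∀ s ∈ F, ∀ a, M.enabled s a → M.prob s a s = 1)
    (S' : Finset S) (M' : MDP (Option S) A)
    (hsub : MDP.IsSubsystem M S' M') (Φ : MOProp S)
    (h : ∃ σ' : MDP.Scheduler M', MDP.SatSub M' σ' Φ) :
    ∃ σ : MDP.Scheduler M, MDP.Sat M σ Φ := by
  obtain ⟨σ', hσ'⟩ := h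
  exact ⟨MDPAux.lift M S' M' hsub σ', MDPAux.sat_transfer hsub σ' Φ hσ'⟩
end

section
/- Let M be an MDP in reachability form (all targets absorbing), M' = (S' ∪ {⊥}, Act, s_in, P') a subsystem, F_1,…,F_k ⊆ S target sets. For every scheduler σ of M there exists a scheduler σ' of M' such that Pr_{M'}^{σ'}(◇F_i) ≤ Pr_M^{σ}(◇F_i) for all i and Pr_{M'}^{σ'}(□G_j) ≤ Pr_M^{σ}(□G_j) for all invariance sets G_j ⊆ S. Conversely, for every scheduler σ' of M' there exists a scheduler σ of M with the same inequalities. -/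
open Finset

/-! A scheduler of either system is simulated in the other by following it on the states of `S'`
(reading histories through the embedding `some`). Along such a pair, every transition probability
of `M'` between states of `S'` is at most the corresponding one of `M`, and the mass that `M'`
sends elsewhere goes to the absorbing sink `⊥`, from which no `F i` is reached and in which no
`G j` holds. Induction on the horizon then bounds the step-bounded probabilities of `M'` by those
of `M`, and the bounds pass to the supremum (reachability) and the infimum (invariance). -/

namespace MDP

lemma map_some_append_singleton {S A : Type} (h : List (S × A)) (s : S) (a : A) :
    h.map (Prod.map some id) ++ [(some s, a)] = (h ++ [(s, a)]).map (Prod.map some id) := by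
  simp

variable {S A : Type} [Fintype S] [Fintype A]

lemma prob_nonneg (M : MDP S A) (s : S) (a : A) (t : S) : 0 ≤ M.prob s a t := by
  unfold prob
  cases h : M.trans s a with
  | none => simp
  | some f => exact M.nonneg' s a f h t

lemma sum_prob_le_one (M : MDP S A) (s : S) (a : A) : ∑ t, M.prob s a t ≤ 1 := by
  unfold prob
  cases h : M.trans s a with
  | none => simp
  | some f => simp [M.sum_one' s a f h]

namespace Scheduler

variable {T : Type} [Fintype T]

noncomputable def default (M : MDP S A) : Scheduler M := by
  classical
  exact
    { choice := fun _ s a => if a = (M.exists_enabled s).choose then 1 else 0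
      choice_nonneg := fun _ _ _ => by split <;> norm_num
      choice_sum_one := fun _ _ => by simp
      choice_support := fun _ s a h => by
        split at h
        · subst a; exact (M.exists_enabled s).choose_spec
        · exact absurd rfl h }

noncomputable def pullback {M : MDP S A} {N : MDP T A} (σ : Scheduler N) (P : S → Prop)
    [DecidablePred P] (f : S → T) (g : List (S × A) → List (T × A))
    (hen : ∀ s, P s → ∀ a, N.enabled (f s) a → M.enabled s a) : Scheduler M where
  choice h s a := if P s then σ.choice (g h) (f s) a else (default M).choice h s a
  choice_nonneg h s a := by
    split
    · exact σ.choice_nonneg _ _ a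
    · exact (default M).choice_nonneg h s a
  choice_sum_one h s := by
    split
    · exact σ.choice_sum_one _ _
    · exact (default M).choice_sum_one h s
  choice_support h s a hne := by
    split at hne
    · exact hen s ‹_› a (σ.choice_support _ _ a hne)
    · exact (default M).choice_support h s a hne

lemma pullback_choice_of_pos {M : MDP S A} {N : MDP T A} (σ : Scheduler N) {P : S → Prop}
    [DecidablePred P] (f : S → T) (g : List (S × A) → List (T × A))
    (hen : ∀ s, P s → ∀ a, N.enabled (f s) a → M.enabled s a) (h : List (S × A)) {s : S}
    (hs : P s) (a : A) : (σ.pullback P f g hen).choice h s a = σ.choice (g h) (f s) a :=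
  if_pos hs

end Scheduler

def Agrees {M : MDP S A} {M' : MDP (Option S) A} (S' : Finset S) (σ : Scheduler M)
    (σ' : Scheduler M') : Prop :=
  ∀ h s a, s ∈ S' → σ'.choice (h.map (Prod.map some id)) (some s) a = σ.choice h s a

section

variable [DecidableEq S]

lemma reachAux_nonneg (M : MDP S A) (σ : Scheduler M) (G : Finset S) :
    ∀ n h s, 0 ≤ reachAux M σ G n h s := by
  intro n
  induction n with
  | zero => intro h s; simp only [reachAux]; positivity
  | succ n ih =>
    intro h s
    simp only [reachAux]
    split
    · exact zero_le_one
    · exact sum_nonneg fun a _ => mul_nonneg (σ.choice_nonneg h s a) <|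
        sum_nonneg fun t _ => mul_nonneg (M.prob_nonneg s a t) (ih _ t)

lemma reachAux_le_one (M : MDP S A) (σ : Scheduler M) (G : Finset S) :
    ∀ n h s, reachAux M σ G n h s ≤ 1 := by
  intro n
  induction n with
  | zero => intro h s; simp only [reachAux]; split <;> norm_num
  | succ n ih =>
    intro h s
    simp only [reachAux]
    split
    · exact le_rfl
    · calc ∑ a, σ.choice h s a * ∑ t, M.prob s a t * reachAux M σ G n (h ++ [(s, a)]) t
          ≤ ∑ a, σ.choice h s a * 1 := by
            gcongr with a _
            · exact σ.choice_nonneg h s a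
            calc ∑ t, M.prob s a t * reachAux M σ G n (h ++ [(s, a)]) t
                ≤ ∑ t, M.prob s a t := sum_le_sum fun t _ =>
                  mul_le_of_le_one_right (M.prob_nonneg s a t) (ih _ t)
              _ ≤ 1 := M.sum_prob_le_one s a
        _ = 1 := by simp [σ.choice_sum_one h s]

lemma invAux_nonneg (M : MDP S A) (σ : Scheduler M) (G : Finset S) :
    ∀ n h s, 0 ≤ invAux M σ G n h s := by
  intro n
  induction n with
  | zero => intro h s; simp only [invAux]; positivity
  | succ n ih =>
    intro h s
    simp only [invAux]
    split
    · exact sum_nonneg fun a _ => mul_nonneg (σ.choice_nonneg h s a) <|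
        sum_nonneg fun t _ => mul_nonneg (M.prob_nonneg s a t) (ih _ t)
    · exact le_rfl

lemma reachAux_eq_zero_of_absorbing (M : MDP S A) (σ : Scheduler M) {G : Finset S} {u : S}
    (hu : u ∉ G) (habs : ∀ a, M.enabled u a → ∀ t, M.prob u a t = if t = u then 1 else 0) :
    ∀ n h, reachAux M σ G n h u = 0 := by
  intro n
  induction n with
  | zero => intro h; simp [reachAux, hu]
  | succ n ih =>
    intro h
    simp only [reachAux, if_neg hu]
    refine sum_eq_zero fun a _ => ?_
    by_cases ha : σ.choice h u a = 0
    · rw [ha, zero_mul]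
    · simp [habs a (σ.choice_support h u a ha), ih]

lemma invAux_eq_zero_of_not_mem (M : MDP S A) (σ : Scheduler M) {G : Finset S} {u : S}
    (hu : u ∉ G) (n : ℕ) (h : List (S × A)) : invAux M σ G n h u = 0 := by
  cases n <;> simp [invAux, hu]

end

namespace IsSubsystem

variable {M : MDP S A} {S' : Finset S} {M' : MDP (Option S) A}

lemma prob_le (hsub : IsSubsystem M S' M') {s t : S} (hs : s ∈ S') (ht : t ∈ S') (a : A) :
    M'.prob (some s) a (some t) ≤ M.prob s a t := by
  obtain ⟨-, -, -, -, hprob, -⟩ := hsub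
  rcases hprob s hs t ht a with h | h <;> rw [h]
  exact M.prob_nonneg s a t

lemma sum_prob_mul_le (hsub : IsSubsystem M S' M') {s : S} (hs : s ∈ S') (a : A)
    {v : S → ℝ} {v' : Option S → ℝ} (hv : ∀ t, 0 ≤ v t) (hv' : ∀ t, 0 ≤ v' t)
    (hnone : v' none = 0) (hle : ∀ t ∈ S', v' (some t) ≤ v t) :
    ∑ t, M'.prob (some s) a t * v' t ≤ ∑ t, M.prob s a t * v t := by
  have ⟨_, _, _, _, _, hout⟩ := hsub
  rw [Fintype.sum_option, hnone, mul_zero, zero_add]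
  refine sum_le_sum fun t _ => ?_
  by_cases ht : t ∈ S'
  · exact mul_le_mul (hsub.prob_le hs ht a) (hle t ht) (hv' _) (M.prob_nonneg s a t)
  · rw [hout s hs t ht a, zero_mul]
    exact mul_nonneg (M.prob_nonneg s a t) (hv t)

variable [DecidableEq S] {σ : Scheduler M} {σ' : Scheduler M'}

lemma reachAux_le (hsub : IsSubsystem M S' M') (hσ : Agrees S' σ σ') (F : Finset S) :
    ∀ n h s, s ∈ S' →
      reachAux M' σ' (F.image some) n (h.map (Prod.map some id)) (some s)
        ≤ reachAux M σ F n h s := by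
  intro n
  induction n with
  | zero => intro h s _; simp [reachAux]
  | succ n ih =>
    intro h s hs
    have ⟨_, _, hsink, _⟩ := hsub
    by_cases hF : s ∈ F
    · simp [reachAux, hF]
    simp only [reachAux, (Option.some_injective S).mem_finset_image, if_neg hF,
      hσ h s _ hs, map_some_append_singleton]
    gcongr with a
    · exact σ.choice_nonneg h s a
    exact hsub.sum_prob_mul_le hs a (reachAux_nonneg M σ F n _) (reachAux_nonneg M' σ' _ n _)
      (reachAux_eq_zero_of_absorbing M' σ' (by simp) hsink n _) (ih _ · ·)

lemma invAux_le (hsub : IsSubsystem M S' M') (hσ : Agrees S' σ σ') (G : Finset S) :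
    ∀ n h s, s ∈ S' →
      invAux M' σ' (G.image some) n (h.map (Prod.map some id)) (some s)
        ≤ invAux M σ G n h s := by
  intro n
  induction n with
  | zero => intro h s _; simp [invAux]
  | succ n ih =>
    intro h s hs
    by_cases hG : s ∈ G
    swap
    · simp [invAux, hG]
    simp only [invAux, (Option.some_injective S).mem_finset_image, if_pos hG,
      hσ h s _ hs, map_some_append_singleton]
    gcongr with a
    · exact σ.choice_nonneg h s a
    exact hsub.sum_prob_mul_le hs a (invAux_nonneg M σ G n _) (invAux_nonneg M' σ' _ n _)
      (invAux_eq_zero_of_not_mem M' σ' (by simp) n _) (ih _ · ·)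

lemma prReach_le (hsub : IsSubsystem M S' M') (hσ : Agrees S' σ σ') (F : Finset S) :
    prReach M' σ' (F.image some) ≤ prReach M σ F := by
  have ⟨hinit, hinit', _⟩ := hsub
  refine ciSup_le fun n => ?_
  rw [hinit']
  exact (hsub.reachAux_le hσ F n [] M.init hinit).trans <|
    le_ciSup ⟨1, Set.forall_mem_range.2 fun m => reachAux_le_one M σ F m [] M.init⟩ n

lemma prInv_le (hsub : IsSubsystem M S' M') (hσ : Agrees S' σ σ') (G : Finset S) :
    prInv M' σ' (G.image some) ≤ prInv M σ G := by
  have ⟨hinit, hinit', _⟩ := hsub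
  refine le_ciInf fun n => (ciInf_le ?_ n).trans ?_
  · exact ⟨0, Set.forall_mem_range.2 fun m => invAux_nonneg M' σ' _ m [] M'.init⟩
  · rw [hinit']
    exact hsub.invAux_le hσ G n [] M.init hinit

end IsSubsystem

end MDP

theorem subsystem_scheduler_correspondence_general {S A : Type} [Fintype S] [Fintype A]
    [DecidableEq S] (M : MDP S A) {k l : ℕ}
    (F : Fin k → Finset S) (G : Fin l → Finset S)
    (S' : Finset S) (M' : MDP (Option S) A) (hsub : MDP.IsSubsystem M S' M') :
    (∀ σ : MDP.Scheduler M, ∃ σ' : MDP.Scheduler M',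
        (∀ i, MDP.prReach M' σ' ((F i).image some) ≤ MDP.prReach M σ (F i)) ∧
        (∀ j, MDP.prInv M' σ' ((G j).image some) ≤ MDP.prInv M σ (G j))) ∧
    (∀ σ' : MDP.Scheduler M', ∃ σ : MDP.Scheduler M,
        (∀ i, MDP.prReach M' σ' ((F i).image some) ≤ MDP.prReach M σ (F i)) ∧
        (∀ j, MDP.prInv M' σ' ((G j).image some) ≤ MDP.prInv M σ (G j))) := by
  classical
  have ⟨_, _, _, hen, _⟩ := hsub
  refine ⟨fun σ => ?_, fun σ' => ?_⟩
  · have hen' : ∀ o ∈ S'.image some, ∀ a, M.enabled (o.getD M.init) a → M'.enabled o a := by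
      simp only [mem_image]
      rintro _ ⟨s, hs, rfl⟩ a
      exact (hen s hs a).2
    let σ' := σ.pullback (· ∈ S'.image some) (·.getD M.init)
      (List.map (Prod.map (·.getD M.init) id)) hen'
    have hσ : MDP.Agrees S' σ σ' := fun h s a hs => by
      rw [MDP.Scheduler.pullback_choice_of_pos _ _ _ _ _ (mem_image_of_mem some hs),
        List.map_map, Prod.map_comp_map]
      simp
    exact ⟨σ', fun i => hsub.prReach_le hσ (F i), fun j => hsub.prInv_le hσ (G j)⟩
  · let σ := σ'.pullback (· ∈ S') some (List.map (Prod.map some id)) fun s hs a => (hen s hs a).1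
    have hσ : MDP.Agrees S' σ σ' := fun h s a hs =>
      (MDP.Scheduler.pullback_choice_of_pos _ _ _ _ _ hs a).symm
    exact ⟨σ, fun i => hsub.prReach_le hσ (F i), fun j => hsub.prInv_le hσ (G j)⟩

/-- Scheduler correspondence between an MDP in reachability form and a subsystem:
every scheduler of `M` is mimicked by a scheduler of `M'` with pointwise smaller
reachability and invariance probabilities, and vice versa. -/
theorem subsystem_scheduler_correspondence {S A : Type} [Fintype S] [Fintype A]
    [DecidableEq S] (M : MDP S A) {k l : ℕ}
    (F : Fin k → Finset S) (G : Fin l → Finset S)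
    (habs : ∀ i, ∀ s ∈ F i, ∀ a, M.enabled s a → M.prob s a s = 1)
    (S' : Finset S) (M' : MDP (Option S) A) (hsub : MDP.IsSubsystem M S' M') :
    (∀ σ : MDP.Scheduler M, ∃ σ' : MDP.Scheduler M',
        (∀ i, MDP.prReach M' σ' ((F i).image some) ≤ MDP.prReach M σ (F i)) ∧
        (∀ j, MDP.prInv M' σ' ((G j).image some) ≤ MDP.prInv M σ (G j))) ∧
    (∀ σ' : MDP.Scheduler M', ∃ σ : MDP.Scheduler M,
        (∀ i, MDP.prReach M' σ' ((F i).image some) ≤ MDP.prReach M σ (F i)) ∧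
        (∀ j, MDP.prInv M' σ' ((G j).image some) ≤ MDP.prInv M σ (G j))) :=
  subsystem_scheduler_correspondence_general M F G S' M' hsub
end
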